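/- Let K ≥ 2 be an integer and let α ∈ ℝ with α ≠ 2. Then there is no constant C > 0 such that D_α(p‖q) ≥ C·‖p−q‖₁² for all p, q ∈ (0,∞)^K; equivalently, inf{ D_α(p‖q)/‖p−q‖₁² : p, q ∈ (0,∞)^K, p ≠ q } = 0. -/

import Mathlib

open Finset Real

/-!
For `t > 0` both sides of a Pinsker inequality scale homogeneously:
`D_α(tp‖tq) = t^α D_α(p‖q)` and `‖tp - tq‖₁² = t² ‖p - q‖₁²`. Hence the set of ratios
`D_α(p‖q) / ‖p - q‖₁²` is invariant under multiplication by `t^(α-2)`, which ranges over all of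
`(0, ∞)` when `α ≠ 2`. As `D_α ≥ 0` (coordinatewise, by `log x ≤ x - 1` and Bernoulli's
inequality), this set is a nonempty cone in `[0, ∞)`, so its infimum is `0` and no `C > 0` bounds it
from below.
-/

/-- The α-Tsallis entropy on the positive orthant (Shannon for α = 1, Burg for α = 0). -/
noncomputable def tsallis (α : ℝ) {K : ℕ} (p : Fin K → ℝ) : ℝ :=
  if α = 0 then ∑ k, Real.log (p k)
  else if α = 1 then -∑ k, p k * Real.log (p k)
  else (∑ k, p k ^ α) / (α * (1 - α))

/-- The gradient of the α-Tsallis entropy on the positive orthant. -/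
noncomputable def tsallisGrad (α : ℝ) {K : ℕ} (q : Fin K → ℝ) (k : Fin K) : ℝ :=
  if α = 0 then 1 / q k
  else if α = 1 then -(1 + Real.log (q k))
  else -(q k ^ (α - 1)) / (α - 1)

/-- The Bregman divergence D_α of the negative α-Tsallis entropy:
`D_α(p‖q) = -S_α(p) + S_α(q) + ⟨∇S_α(q), p - q⟩`. -/
noncomputable def breg (α : ℝ) {K : ℕ} (p q : Fin K → ℝ) : ℝ :=
  -tsallis α p + tsallis α q + ∑ k, tsallisGrad α q k * (p k - q k)

/-- The relative interior of the probability simplex Δ^K. -/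
def relintSimplex (K : ℕ) : Set (Fin K → ℝ) :=
  {p | (∀ k, 0 < p k ∧ p k < 1) ∧ ∑ k, p k = 1}

/-- The ℓ¹ norm on ℝ^K. -/
noncomputable def l1 {K : ℕ} (x : Fin K → ℝ) : ℝ := ∑ k, |x k|

lemma one_add_mul_sub_one_le_rpow_of_nonpos {r α : ℝ} (hr : 0 < r) (hα : α ≤ 0) :
    1 + α * (r - 1) ≤ r ^ α := by
  have hlog : α * (r - 1) ≤ α * log r :=
    mul_le_mul_of_nonpos_left (log_le_sub_one_of_pos hr) hα
  calc 1 + α * (r - 1) ≤ α * log r + 1 := by linarith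
    _ ≤ exp (α * log r) := add_one_le_exp _
    _ = r ^ α := by rw [rpow_def_of_pos hr, mul_comm]

noncomputable def bregTerm (α x y : ℝ) : ℝ :=
  if α = 0 then -log x + log y + (x - y) / y
  else if α = 1 then x * log x - y * log y - (1 + log y) * (x - y)
  else (y ^ α - x ^ α) / (α * (1 - α)) - y ^ (α - 1) / (α - 1) * (x - y)

lemma breg_eq_sum_bregTerm (α : ℝ) {K : ℕ} (p q : Fin K → ℝ) :
    breg α p q = ∑ k, bregTerm α (p k) (q k) := by
  unfold breg tsallis tsallisGrad bregTerm
  split_ifs <;> simp only [sum_div, ← sum_neg_distrib, ← sum_add_distrib] <;>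
    exact sum_congr rfl fun k _ => by ring

lemma bregTerm_mul (α : ℝ) {t x y : ℝ} (ht : 0 < t) (hx : 0 < x) (hy : 0 < y) :
    bregTerm α (t * x) (t * y) = t ^ α * bregTerm α x y := by
  unfold bregTerm
  split_ifs with h0 h1
  · subst h0
    rw [log_mul ht.ne' hx.ne', log_mul ht.ne' hy.ne', rpow_zero]
    field_simp
    ring
  · subst h1
    rw [log_mul ht.ne' hx.ne', log_mul ht.ne' hy.ne', rpow_one]
    ring
  · rw [mul_rpow ht.le hx.le, mul_rpow ht.le hy.le, mul_rpow ht.le hy.le,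
      rpow_sub_one ht.ne']
    field_simp

lemma bregTerm_one_nonneg (α : ℝ) {r : ℝ} (hr : 0 < r) : 0 ≤ bregTerm α r 1 := by
  unfold bregTerm
  split_ifs with h0 h1
  · simp only [log_one, div_one]
    linarith [log_le_sub_one_of_pos hr]
  · have hlog : r - 1 ≤ r * log r :=
      calc r - 1 = r * (1 - r⁻¹) := by field_simp
        _ ≤ r * log r := by gcongr; exact one_sub_inv_le_log_of_pos hr
    simp only [log_one, mul_zero]
    linarith
  · have hs : -1 ≤ r - 1 := by linarith
    rw [one_rpow, one_rpow, show (1 - r ^ α) / (α * (1 - α)) - 1 / (α - 1) * (r - 1)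
      = (r ^ α - 1 - α * (r - 1)) / (α * (α - 1)) by field_simp; ring]
    rcases lt_or_gt_of_ne h0 with hneg | hpos
    · have := one_add_mul_sub_one_le_rpow_of_nonpos hr hneg.le
      exact div_nonneg (by linarith) (by nlinarith)
    rcases lt_or_gt_of_ne h1 with hlt | hgt
    · have := rpow_one_add_le_one_add_mul_self hs hpos.le hlt.le
      rw [add_sub_cancel] at this
      exact div_nonneg_of_nonpos (by linarith) (by nlinarith)
    · have := one_add_mul_self_le_rpow_one_add hs hgt.le
      rw [add_sub_cancel] at this
      exact div_nonneg (by linarith) (by nlinarith)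

lemma bregTerm_nonneg (α : ℝ) {x y : ℝ} (hx : 0 < x) (hy : 0 < y) : 0 ≤ bregTerm α x y := by
  have h := bregTerm_mul α hy (div_pos hx hy) one_pos
  rw [mul_div_cancel₀ x hy.ne', mul_one] at h
  rw [h]
  exact mul_nonneg (rpow_nonneg hy.le α) (bregTerm_one_nonneg α (div_pos hx hy))

lemma breg_nonneg (α : ℝ) {K : ℕ} {p q : Fin K → ℝ} (hp : ∀ k, 0 < p k) (hq : ∀ k, 0 < q k) :
    0 ≤ breg α p q := by
  rw [breg_eq_sum_bregTerm]
  exact sum_nonneg fun k _ => bregTerm_nonneg α (hp k) (hq k)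

lemma breg_smul (α : ℝ) {K : ℕ} {t : ℝ} (ht : 0 < t) {p q : Fin K → ℝ}
    (hp : ∀ k, 0 < p k) (hq : ∀ k, 0 < q k) :
    breg α (t • p) (t • q) = t ^ α * breg α p q := by
  simp only [breg_eq_sum_bregTerm, Pi.smul_apply, smul_eq_mul, mul_sum,
    bregTerm_mul α ht (hp _) (hq _)]

lemma l1_smul {K : ℕ} (t : ℝ) (x : Fin K → ℝ) : l1 (t • x) = |t| * l1 x := by
  simp only [l1, Pi.smul_apply, smul_eq_mul, abs_mul, mul_sum]

lemma l1_pos {K : ℕ} {x : Fin K → ℝ} (hx : x ≠ 0) : 0 < l1 x := by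
  obtain ⟨k, hk⟩ := Function.ne_iff.mp hx
  exact sum_pos' (fun i _ => abs_nonneg _) ⟨k, mem_univ _, abs_pos.mpr hk⟩

lemma breg_div_l1_sq_smul (α : ℝ) {K : ℕ} {t : ℝ} (ht : 0 < t) {p q : Fin K → ℝ}
    (hp : ∀ k, 0 < p k) (hq : ∀ k, 0 < q k) :
    breg α (t • p) (t • q) / l1 (t • p - t • q) ^ 2
      = t ^ (α - 2) * (breg α p q / l1 (p - q) ^ 2) := by
  rw [breg_smul α ht hp hq, ← smul_sub, l1_smul, abs_of_pos ht, mul_pow, mul_div_mul_comm,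
    rpow_sub ht, rpow_two]

lemma sInf_eq_zero_of_forall_mul_mem {S : Set ℝ} (hS : S.Nonempty) (hS_nonneg : ∀ r ∈ S, 0 ≤ r)
    (hS_mul : ∀ r ∈ S, ∀ s > 0, s * r ∈ S) : sInf S = 0 := by
  obtain ⟨r, hr⟩ := hS
  refine le_antisymm (le_of_forall_pos_le_add fun ε hε => ?_) (Real.sInf_nonneg hS_nonneg)
  have hr1 : 0 < r + 1 := by linarith [hS_nonneg r hr]
  calc sInf S ≤ ε / (r + 1) * r := csInf_le ⟨0, hS_nonneg⟩ (hS_mul r hr _ (by positivity))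
    _ ≤ 0 + ε := by
      rw [div_mul_eq_mul_div, div_le_iff₀ hr1]
      nlinarith

theorem no_pinsker_on_orthant (K : ℕ) (hK : 2 ≤ K) (α : ℝ) (hα : α ≠ 2) :
    (¬ ∃ C > (0 : ℝ), ∀ p q : Fin K → ℝ, (∀ k, 0 < p k) → (∀ k, 0 < q k) →
        breg α p q ≥ C * (l1 (p - q)) ^ 2) ∧
    sInf {r : ℝ | ∃ p q : Fin K → ℝ, (∀ k, 0 < p k) ∧ (∀ k, 0 < q k) ∧ p ≠ q ∧
        r = breg α p q / (l1 (p - q)) ^ 2} = 0 := by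
  set S := {r : ℝ | ∃ p q : Fin K → ℝ, (∀ k, 0 < p k) ∧ (∀ k, 0 < q k) ∧ p ≠ q ∧
    r = breg α p q / (l1 (p - q)) ^ 2}
  have hS : S.Nonempty := by
    refine ⟨_, 1, 2, fun _ => one_pos, fun _ => two_pos, fun h => ?_, rfl⟩
    simpa using congrFun h ⟨0, by omega⟩
  have hS_nonneg : ∀ r ∈ S, 0 ≤ r := by
    rintro r ⟨p, q, hp, hq, -, rfl⟩
    exact div_nonneg (breg_nonneg α hp hq) (sq_nonneg _)
  have hS_mul : ∀ r ∈ S, ∀ s > 0, s * r ∈ S := by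
    rintro r ⟨p, q, hp, hq, hpq, rfl⟩ s hs
    obtain ⟨t, ht, rfl⟩ : ∃ t > 0, t ^ (α - 2) = s :=
      ⟨s ^ (α - 2)⁻¹, rpow_pos_of_pos hs _,
        by rw [← rpow_mul hs.le, inv_mul_cancel₀ (sub_ne_zero.mpr hα), rpow_one]⟩
    exact ⟨t • p, t • q, fun k => mul_pos ht (hp k), fun k => mul_pos ht (hq k),
      (smul_right_injective _ ht.ne').ne hpq, (breg_div_l1_sq_smul α ht hp hq).symm⟩
  have hS_inf : sInf S = 0 := sInf_eq_zero_of_forall_mul_mem hS hS_nonneg hS_mul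
  refine ⟨fun ⟨C, hC, hbound⟩ => ?_, hS_inf⟩
  have : C ≤ sInf S := le_csInf hS fun r ⟨p, q, hp, hq, hpq, hr⟩ => hr ▸
    (le_div_iff₀ (pow_pos (l1_pos (sub_ne_zero.mpr hpq)) 2)).mpr (hbound p q hp hq)
  linarith
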